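/- (Hyperbolic half-planes: exterior case) For every λ_c ∈ ℝ and R ≥ 0, the set X = {z ∈ ℂ : Im z > 0 and |z − λ_c| ≥ R} is h-convex: for all z₁, z₂ ∈ X, the arc ARC(z₁, z₂) is contained in X. -/

import Mathlib

/-- The open upper half-plane ℂ₊ = {z ∈ ℂ : Im z > 0}. -/
def Cplus : Set ℂ := {z : ℂ | 0 < z.im}

open Classical in
/-- The hyperbolic geodesic arc between z₁ and z₂: if Re z₁ = Re z₂ it is the vertical
segment between them; otherwise it is the arc of the circle centered at
c = (|z₂|² − |z₁|²)/(2·(Re z₂ − Re z₁)) on the real axis through z₁ and z₂. -/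
noncomputable def ARC (z₁ z₂ : ℂ) : Set ℂ :=
  if z₁.re = z₂.re then
    {w | ∃ t : ℝ, min z₁.im z₂.im ≤ t ∧ t ≤ max z₁.im z₂.im ∧
      w = (z₁.re : ℂ) + (t : ℂ) * Complex.I}
  else
    let c : ℝ := (‖z₂‖ ^ 2 - ‖z₁‖ ^ 2) / (2 * (z₂.re - z₁.re))
    let ρ : ℝ := ‖z₁ - (c : ℂ)‖
    let φ₁ : ℝ := Complex.arg (z₁ - (c : ℂ))
    let φ₂ : ℝ := Complex.arg (z₂ - (c : ℂ))
    {w | ∃ φ : ℝ, min φ₁ φ₂ ≤ φ ∧ φ ≤ max φ₁ φ₂ ∧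
      w = (c : ℂ) + (ρ : ℂ) * Complex.exp (Complex.I * (φ : ℂ))}

/-- A set C ⊆ ℂ₊ is h-convex if for all z₁, z₂ ∈ C, ARC(z₁, z₂) ⊆ C. -/
def HConvex (C : Set ℂ) : Prop :=
  ∀ z₁ ∈ C, ∀ z₂ ∈ C, ARC z₁ z₂ ⊆ C

/-- The h-convex hull of C ⊆ ℂ₊: the intersection of all h-convex sets D with
C ⊆ D ⊆ ℂ₊. -/
def hhull (C : Set ℂ) : Set ℂ :=
  ⋂₀ {D : Set ℂ | HConvex D ∧ C ⊆ D ∧ D ⊆ Cplus}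

private lemma le_abs_of_sq (R : ℝ) (hR : 0 ≤ R) (z : ℂ) (h : R ^ 2 ≤ z.re ^ 2 + z.im ^ 2) :
    R ≤ ‖z‖ := by
  rw [Complex.norm_def, Real.le_sqrt hR (Complex.normSq_nonneg z), Complex.normSq_apply]
  nlinarith

private lemma sq_le_of_le_abs (R : ℝ) (hR : 0 ≤ R) (z : ℂ) (h : R ≤ ‖z‖) :
    R ^ 2 ≤ z.re ^ 2 + z.im ^ 2 := by
  have := Complex.sq_norm z
  rw [Complex.normSq_apply] at this
  nlinarith [pow_le_pow_left₀ hR h 2]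

private lemma arg_bounds {z : ℂ} (hz : 0 < z.im) :
    0 < Complex.arg z ∧ Complex.arg z < Real.pi := by
  have habs : 0 < ‖z‖ := by
    simp only [norm_pos_iff]
    intro h; rw [h] at hz; simp at hz
  have hsin : 0 < Real.sin (Complex.arg z) := by
    rw [Complex.sin_arg]
    exact div_pos hz habs
  have h1 := Complex.neg_pi_lt_arg z
  have h2 := Complex.arg_le_pi z
  constructor
  · by_contra h
    push_neg at h
    have := Real.sin_nonpos_of_nonpos_of_neg_pi_le h (le_of_lt h1)
    linarith
  · rcases lt_or_eq_of_le h2 with h | h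
    · exact h
    · rw [h, Real.sin_pi] at hsin; linarith

set_option maxHeartbeats 1000000 in
/-- Hyperbolic half-planes: exterior case: for every λ_c ∈ ℝ and R ≥ 0,
the set X = {z ∈ ℂ : Im z > 0 ∧ |z − λ_c| ≥ R} is h-convex. -/
theorem stmt_15 (lc R : ℝ) (hR : 0 ≤ R) :
    HConvex {z : ℂ | 0 < z.im ∧ R ≤ ‖z - (lc : ℂ)‖} := by
  intro z₁ hz₁ z₂ hz₂ w hw
  obtain ⟨h1im, h1R⟩ := hz₁
  obtain ⟨h2im, h2R⟩ := hz₂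
  have h1sq := sq_le_of_le_abs R hR _ h1R
  have h2sq := sq_le_of_le_abs R hR _ h2R
  simp only [Complex.sub_re, Complex.sub_im, Complex.ofReal_re, Complex.ofReal_im,
    sub_zero] at h1sq h2sq
  rw [ARC] at hw
  by_cases hre : z₁.re = z₂.re
  · rw [if_pos hre] at hw
    obtain ⟨t, ht1, ht2, hwt⟩ := hw
    have hwre : w.re = z₁.re := by simp [hwt]
    have hwim : w.im = t := by simp [hwt]
    have htpos : 0 < t := lt_of_lt_of_le (lt_min h1im h2im) ht1
    constructor
    · rw [hwim]; exact htpos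
    · apply le_abs_of_sq R hR
      simp only [Complex.sub_re, Complex.sub_im, Complex.ofReal_re, Complex.ofReal_im,
        sub_zero, hwre, hwim]
      rcases le_total z₁.im z₂.im with h | h
      · have : z₁.im ≤ t := by simpa [min_eq_left h] using ht1
        nlinarith
      · have : z₂.im ≤ t := by simpa [min_eq_right h] using ht1
        rw [hre]; nlinarith
  · rw [if_neg hre] at hw
    set c : ℝ := (‖z₂‖ ^ 2 - ‖z₁‖ ^ 2) / (2 * (z₂.re - z₁.re)) with hc
    set ρ : ℝ := ‖z₁ - (c : ℂ)‖ with hρ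
    set φ₁ : ℝ := Complex.arg (z₁ - (c : ℂ)) with hφ₁
    set φ₂ : ℝ := Complex.arg (z₂ - (c : ℂ)) with hφ₂
    obtain ⟨φ, hφmin, hφmax, hwφ⟩ := hw
    rw [← hρ] at hwφ
    rw [← hφ₁, ← hφ₂] at hφmin hφmax
    have hd : z₂.re - z₁.re ≠ 0 := sub_ne_zero.mpr (Ne.symm hre)
    -- z₂ is equidistant from c
    have habs2 : ‖z₂ - (c : ℂ)‖ = ρ := by
      rw [hρ, Complex.norm_def, Complex.norm_def]
      congr 1
      simp only [Complex.normSq_apply, Complex.sub_re, Complex.sub_im, Complex.ofReal_re,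
        Complex.ofReal_im, sub_zero]
      have e1 : ‖z₁‖ ^ 2 = z₁.re ^ 2 + z₁.im ^ 2 := by
        rw [Complex.sq_norm, Complex.normSq_apply]; ring
      have e2 : ‖z₂‖ ^ 2 = z₂.re ^ 2 + z₂.im ^ 2 := by
        rw [Complex.sq_norm, Complex.normSq_apply]; ring
      rw [hc, e1, e2]
      field_simp
      ring
    have hρpos : 0 < ρ := by
      rw [hρ]
      simp only [norm_pos_iff]
      intro h
      have : z₁.im = 0 := by
        have := congrArg Complex.im h
        simpa using this
      linarith
    -- polar forms
    have hz1p : z₁ - (c : ℂ) = (ρ : ℂ) * Complex.exp ((φ₁ : ℂ) * Complex.I) := by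
      rw [hρ, hφ₁]; exact (Complex.norm_mul_exp_arg_mul_I _).symm
    have hz2p : z₂ - (c : ℂ) = (ρ : ℂ) * Complex.exp ((φ₂ : ℂ) * Complex.I) := by
      rw [← habs2, hφ₂]; exact (Complex.norm_mul_exp_arg_mul_I _).symm
    have hz1re : z₁.re = c + ρ * Real.cos φ₁ := by
      have := congrArg Complex.re hz1p
      simp [Complex.exp_ofReal_mul_I_re, Complex.exp_ofReal_mul_I_im] at this
      linarith
    have hz1im : z₁.im = ρ * Real.sin φ₁ := by
      have := congrArg Complex.im hz1p
      simpa [Complex.exp_ofReal_mul_I_re, Complex.exp_ofReal_mul_I_im] using this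
    have hz2re : z₂.re = c + ρ * Real.cos φ₂ := by
      have := congrArg Complex.re hz2p
      simp [Complex.exp_ofReal_mul_I_re, Complex.exp_ofReal_mul_I_im] at this
      linarith
    have hz2im : z₂.im = ρ * Real.sin φ₂ := by
      have := congrArg Complex.im hz2p
      simpa [Complex.exp_ofReal_mul_I_re, Complex.exp_ofReal_mul_I_im] using this
    -- arg bounds
    have hb1 : 0 < φ₁ ∧ φ₁ < Real.pi := by
      apply arg_bounds; simpa using h1im
    have hb2 : 0 < φ₂ ∧ φ₂ < Real.pi := by
      apply arg_bounds; simpa using h2im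
    have hφpos : 0 < φ := lt_of_lt_of_le (lt_min hb1.1 hb2.1) hφmin
    have hφlt : φ < Real.pi := lt_of_le_of_lt hφmax (max_lt hb1.2 hb2.2)
    have hwre : w.re = c + ρ * Real.cos φ := by
      rw [hwφ, mul_comm Complex.I]
      simp [Complex.exp_ofReal_mul_I_re]
    have hwim : w.im = ρ * Real.sin φ := by
      rw [hwφ, mul_comm Complex.I]
      simp [Complex.exp_ofReal_mul_I_im]
    constructor
    · rw [hwim]
      exact mul_pos hρpos (Real.sin_pos_of_pos_of_lt_pi hφpos hφlt)
    · apply le_abs_of_sq R hR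
      simp only [Complex.sub_re, Complex.sub_im, Complex.ofReal_re, Complex.ofReal_im,
        sub_zero, hwre, hwim]
      have hpyth := Real.sin_sq_add_cos_sq φ
      have hp1 := Real.sin_sq_add_cos_sq φ₁
      have hp2 := Real.sin_sq_add_cos_sq φ₂
      have key : R ^ 2 ≤ (c - lc) ^ 2 + ρ ^ 2 + 2 * ρ * (c - lc) * Real.cos φ := by
        have e1 : (c + ρ * Real.cos φ₁ - lc) ^ 2 + (ρ * Real.sin φ₁) ^ 2
            = (c - lc) ^ 2 + ρ ^ 2 + 2 * ρ * (c - lc) * Real.cos φ₁ := by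
          linear_combination (ρ ^ 2) * hp1
        have e2 : (c + ρ * Real.cos φ₂ - lc) ^ 2 + (ρ * Real.sin φ₂) ^ 2
            = (c - lc) ^ 2 + ρ ^ 2 + 2 * ρ * (c - lc) * Real.cos φ₂ := by
          linear_combination (ρ ^ 2) * hp2
        have h1' : R ^ 2 ≤ (c - lc) ^ 2 + ρ ^ 2 + 2 * ρ * (c - lc) * Real.cos φ₁ := by
          rw [hz1re, hz1im] at h1sq; linarith
        have h2' : R ^ 2 ≤ (c - lc) ^ 2 + ρ ^ 2 + 2 * ρ * (c - lc) * Real.cos φ₂ := by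
          rw [hz2re, hz2im] at h2sq; linarith
        rcases le_total φ₁ φ₂ with h | h
        · have hu : Real.cos φ ≤ Real.cos φ₁ :=
            Real.cos_le_cos_of_nonneg_of_le_pi hb1.1.le hφlt.le
              (by simpa [min_eq_left h] using hφmin)
          have hl : Real.cos φ₂ ≤ Real.cos φ :=
            Real.cos_le_cos_of_nonneg_of_le_pi hφpos.le hb2.2.le
              (by simpa [max_eq_right h] using hφmax)
          rcases le_total 0 (2 * ρ * (c - lc)) with hs | hs
          · linarith [mul_le_mul_of_nonneg_left hl hs]
          · linarith [mul_le_mul_of_nonpos_left hu hs]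
        · have hu : Real.cos φ ≤ Real.cos φ₂ :=
            Real.cos_le_cos_of_nonneg_of_le_pi hb2.1.le hφlt.le
              (by simpa [min_eq_right h] using hφmin)
          have hl : Real.cos φ₁ ≤ Real.cos φ :=
            Real.cos_le_cos_of_nonneg_of_le_pi hφpos.le hb1.2.le
              (by simpa [max_eq_left h] using hφmax)
          rcases le_total 0 (2 * ρ * (c - lc)) with hs | hs
          · linarith [mul_le_mul_of_nonneg_left hl hs]
          · linarith [mul_le_mul_of_nonpos_left hu hs]
      have eφ : (c + ρ * Real.cos φ - lc) ^ 2 + (ρ * Real.sin φ) ^ 2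
          = (c - lc) ^ 2 + ρ ^ 2 + 2 * ρ * (c - lc) * Real.cos φ := by
        linear_combination (ρ ^ 2) * hpyth
      linarith
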